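/- arXiv:1908.05322 — 3 statements merged into one kernel-verified Lean document; each statement's English description precedes it below -/
import Mathlib

section
/- Let n ≥ 3, λ > 0, and let u_1, …, u_n be complex numbers. Suppose that for all i, j in {1, …, n} the identity (u_i·η̄_j + η_i·ū_j) − 2(n−2)·u_i·ū_j = (n−3)·Σ_r (T^j_{ir}·ū_r + conj(T^i_{jr})·u_r) + δ_{ij}·Σ_r (u_r·η̄_r + η_r·ū_r − 2(n−2)|u_r|²) holds, where η_i = 0 for i < n, η_n = λ, and T^n_{**} = 0. Then taking i = j = n yields Σ_{r=1}^{n−1} |u_r|² = 0, i.e. u_1 = ⋯ = u_{n−1} = 0. -/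
/-- Equation (eq:BBcompare): taking `i = j = n` forces `u_1 = ⋯ = u_{n-1} = 0`. -/
theorem stmt5 (n : ℕ) (hn : 3 ≤ n) (lam : ℝ) (hlam : 0 < lam)
    (u η : Fin n → ℂ) (T : Fin n → Fin n → Fin n → ℂ)
    (N : Fin n) (hN : N = ⟨n - 1, by omega⟩)
    (hη0 : ∀ i, i ≠ N → η i = 0) (hηN : η N = (lam : ℂ))
    (hTN : ∀ i k, T N i k = 0)
    (heq : ∀ i j, (u i * star (η j) + η i * star (u j))
          - ((2 * (n - 2) : ℕ) : ℂ) * (u i * star (u j))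
        = ((n - 3 : ℕ) : ℂ) * ∑ r, (T j i r * star (u r) + star (T i j r) * u r)
          + (if i = j then (1 : ℂ) else 0) *
            ∑ r, (u r * star (η r) + η r * star (u r)
              - ((2 * (n - 2) : ℕ) : ℂ) * (Complex.normSq (u r) : ℂ))) :
    ∀ i, i ≠ N → u i = 0 := by
  intro i hi
  have h := heq N N
  set c : ℂ := ((2 * (n - 2) : ℕ) : ℂ) with hc
  have hsum : ∑ r, (u r * star (η r) + η r * star (u r) - c * (Complex.normSq (u r) : ℂ))
      = (u N * star (η N) + η N * star (u N) - c * (Complex.normSq (u N) : ℂ))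
        + ∑ r ∈ Finset.univ.erase N, (- c * (Complex.normSq (u r) : ℂ)) := by
    rw [← Finset.add_sum_erase _ _ (Finset.mem_univ N)]
    congr 1
    refine Finset.sum_congr rfl fun r hr => ?_
    simp only [hη0 r (Finset.ne_of_mem_erase hr), star_zero, mul_zero, zero_mul, zero_add]
    ring
  rw [hsum] at h
  simp only [hTN, star_zero, zero_mul, mul_zero, zero_add, add_zero, if_pos rfl, one_mul,
    Finset.sum_const_zero, eq_self_iff_true, if_true] at h
  have huN : u N * star (u N) = (Complex.normSq (u N) : ℂ) := by
    rw [← Complex.mul_conj]; rfl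
  rw [huN] at h
  have h0 : ∑ r ∈ Finset.univ.erase N, (-c * (Complex.normSq (u r) : ℂ)) = 0 := by
    linear_combination -h
  have hc0 : c ≠ 0 := by
    rw [hc]
    exact Nat.cast_ne_zero.mpr (by omega)
  rw [← Finset.mul_sum, neg_mul, neg_eq_zero, mul_eq_zero] at h0
  have hsum0 : ∑ r ∈ Finset.univ.erase N, Complex.normSq (u r) = 0 := by
    have := h0.resolve_left hc0
    exact_mod_cast (by push_cast at this ⊢; exact this : ((∑ r ∈ Finset.univ.erase N, Complex.normSq (u r) : ℝ) : ℂ) = 0)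
  have := (Finset.sum_eq_zero_iff_of_nonneg (fun r _ => Complex.normSq_nonneg (u r))).mp hsum0
    i (Finset.mem_erase.mpr ⟨hi, Finset.mem_univ i⟩)
  exact Complex.normSq_eq_zero.mp this
end

section
/- Let T : Fin n → Fin n → Fin n → ℂ be antisymmetric in its lower two indices and satisfy the Bianchi-type identity Σ_r ( T^r_{ij}·T^ℓ_{rk} + T^r_{ki}·T^ℓ_{rj} + T^r_{jk}·T^ℓ_{ri} ) = 0 for all i, j, k, ℓ. Define η_r = Σ_k T^k_{kr}. Then Σ_r η_r · T^r_{ij} = 0 for all i, j. -/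
/-- The quadratic Bianchi identity for parallel Strominger torsion implies that the
torsion 1-form annihilates the torsion. -/
theorem stmt6 (n : ℕ) (T : Fin n → Fin n → Fin n → ℂ)
    (hT : ∀ j i k, T j i k = - T j k i)
    (hBianchi : ∀ i j k l,
      ∑ r, (T r i j * T l r k + T r k i * T l r j + T r j k * T l r i) = 0)
    (η : Fin n → ℂ) (hη : ∀ r, η r = ∑ k, T k k r) :
    ∀ i j, ∑ r, η r * T r i j = 0 := by
  intro i j
  have H : ∑ k, ∑ r, (T r i j * T k r k + T r k i * T k r j + T r j k * T k r i) = 0 := by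
    simp [hBianchi i j]
  rw [Finset.sum_congr rfl (fun k _ => Finset.sum_add_distrib)] at H
  rw [Finset.sum_add_distrib] at H
  rw [Finset.sum_congr rfl (fun k _ => Finset.sum_add_distrib)] at H
  rw [Finset.sum_add_distrib] at H
  have h1 : ∑ k, ∑ r, T r i j * T k r k = - ∑ r, η r * T r i j := by
    rw [Finset.sum_comm, ← Finset.sum_neg_distrib]
    refine Finset.sum_congr rfl fun r _ => ?_
    rw [← Finset.mul_sum, hη]
    have : ∑ k, T k r k = - ∑ k, T k k r := by
      rw [← Finset.sum_neg_distrib]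
      exact Finset.sum_congr rfl fun k _ => hT k r k
    rw [this]; ring
  have h2 : ∑ k, ∑ r, T r j k * T k r i = - ∑ k, ∑ r, T r k i * T k r j := by
    rw [Finset.sum_comm, ← Finset.sum_neg_distrib]
    refine Finset.sum_congr rfl fun a _ => ?_
    rw [← Finset.sum_neg_distrib]
    refine Finset.sum_congr rfl fun b _ => ?_
    rw [hT a j b]; ring
  rw [h1, h2] at H
  linear_combination -H
end

section
/- Let n ≥ 2 and consider complex numbers a_1, …, a_{n−1} with Σ_i a_i = λ > 0 and a_i·conj(a_k) + a_k·conj(a_i) = 0 for all 1 ≤ i < k ≤ n−1. Then either (rank 1) exactly one a_i equals λ and the rest are 0, or (rank 2) exactly two are nonzero and, after relabeling so these are a_{n−2}, a_{n−1}, there exists ρ ∈ ℂ with |ρ| = 1 such that a_{n−2} = (λ/2)(1+ρ) and a_{n−1} = (λ/2)(1−ρ). -/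
/-! The condition `a i * conj (a k) + a k * conj (a i) = 0` says that `a i` and `a k` are
orthogonal as vectors of `ℂ ≅ ℝ²`. Algebraically, for three such numbers `x, y, z` one has
`2 (x ȳ)(x z̄) = 0`, so at most two of the `a i` are nonzero; at least one is, since they sum
to `λ ≠ 0`. If exactly two, `a`, `b`, are nonzero, orthogonality gives `|a - b| = |a + b| = λ`,
and `ρ = (a - b) / λ` is the required unit complex number. -/

theorem eq_zero_or_eq_zero_or_eq_zero_of_mul_star_add_mul_star {K : Type*} [Field K]
    [StarRing K] [NeZero (2 : K)] {x y z : K}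
    (hxy : x * star y + y * star x = 0) (hxz : x * star z + z * star x = 0)
    (hyz : y * star z + z * star y = 0) : x = 0 ∨ y = 0 ∨ z = 0 := by
  have h : 2 * ((x * star y) * (x * star z)) = 0 := by
    linear_combination (x * star z) * hxy + (x * star y) * hxz - (x * star x) * hyz
  simp only [mul_eq_zero, two_ne_zero, star_eq_zero, false_or] at h
  tauto

theorem Complex.inner_eq_zero_of_mul_star_add_mul_star {a b : ℂ}
    (h : a * star b + b * star a = 0) : inner ℝ a b = 0 := by
  have hre := congrArg Complex.re h
  simp only [Complex.star_def, Complex.add_re, Complex.mul_re, Complex.conj_re,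
    Complex.conj_im, Complex.zero_re] at hre
  rw [Complex.inner, Complex.mul_re, Complex.conj_re, Complex.conj_im]
  linarith

theorem Complex.exists_norm_eq_one_of_add_eq_ofReal {a b : ℂ} {r : ℝ} (hr : r ≠ 0)
    (hab : a + b = r) (horth : a * star b + b * star a = 0) :
    ∃ ρ : ℂ, ‖ρ‖ = 1 ∧ a = (r : ℂ) / 2 * (1 + ρ) ∧ b = (r : ℂ) / 2 * (1 - ρ) := by
  have hrC : (r : ℂ) ≠ 0 := by exact_mod_cast hr
  have hnorm : ‖a - b‖ = ‖(r : ℂ)‖ := by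
    rw [← hab, norm_sub_eq_norm_add (Complex.inner_eq_zero_of_mul_star_add_mul_star
      (by linear_combination horth)), add_comm]
  refine ⟨(a - b) / r, ?_, ?_, ?_⟩
  · rw [norm_div, hnorm, div_self (norm_ne_zero_iff.mpr hrC)]
  · field_simp
    linear_combination hab
  · field_simp
    linear_combination hab

theorem stmt16_general (n : ℕ) (lam : ℝ) (hlam : 0 < lam)
    (a : Fin (n - 1) → ℂ)
    (hsum : ∑ i, a i = (lam : ℂ))
    (horth : ∀ i k, i ≠ k → a i * star (a k) + a k * star (a i) = 0) :
    (∃ i, a i = (lam : ℂ) ∧ ∀ j, j ≠ i → a j = 0) ∨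
    (∃ i j, i ≠ j ∧ a i ≠ 0 ∧ a j ≠ 0 ∧ (∀ k, k ≠ i → k ≠ j → a k = 0) ∧
      ∃ ρ : ℂ, ‖ρ‖ = 1 ∧
        a i = ((lam : ℂ) / 2) * (1 + ρ) ∧ a j = ((lam : ℂ) / 2) * (1 - ρ)) := by
  obtain ⟨i, hi⟩ : ∃ i, a i ≠ 0 := by
    by_contra! h
    simp only [h, Finset.sum_const_zero] at hsum
    exact hlam.ne (by exact_mod_cast hsum)
  by_cases hrank1 : ∀ j, j ≠ i → a j = 0
  · left
    refine ⟨i, ?_, hrank1⟩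
    rwa [Finset.sum_eq_single i (fun j _ => hrank1 j) (by simp)] at hsum
  right
  push Not at hrank1
  obtain ⟨j, hji, hj⟩ := hrank1
  have hzero : ∀ k, k ≠ i → k ≠ j → a k = 0 := fun k hki hkj => by
    rcases eq_zero_or_eq_zero_or_eq_zero_of_mul_star_add_mul_star (horth i j hji.symm)
      (horth i k (Ne.symm hki)) (horth j k (Ne.symm hkj)) with h | h | h
    exacts [absurd h hi, absurd h hj, h]
  have hpair : a i + a j = lam := by
    rwa [Finset.sum_eq_add i j hji.symm (fun k _ hk => hzero k hk.1 hk.2) (by simp) (by simp)]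
      at hsum
  exact ⟨i, j, hji.symm, hi, hj, hzero,
    Complex.exists_norm_eq_one_of_add_eq_ofReal hlam.ne' hpair (horth i j hji.symm)⟩

/-- Classification of torsion eigenvalues of a non-Kähler SKL manifold with
degenerate torsion: either exactly one `a i` is nonzero and equals `λ` (rank 1),
or exactly two are nonzero of the form `(λ/2)(1 ± ρ)` with `|ρ| = 1` (rank 2). -/
theorem stmt16 (n : ℕ) (hn : 2 ≤ n) (lam : ℝ) (hlam : 0 < lam)
    (a : Fin (n - 1) → ℂ)
    (hsum : ∑ i, a i = (lam : ℂ))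
    (horth : ∀ i k, i ≠ k → a i * star (a k) + a k * star (a i) = 0) :
    (∃ i, a i = (lam : ℂ) ∧ ∀ j, j ≠ i → a j = 0) ∨
    (∃ i j, i ≠ j ∧ a i ≠ 0 ∧ a j ≠ 0 ∧ (∀ k, k ≠ i → k ≠ j → a k = 0) ∧
      ∃ ρ : ℂ, ‖ρ‖ = 1 ∧
        a i = ((lam : ℂ) / 2) * (1 + ρ) ∧ a j = ((lam : ℂ) / 2) * (1 - ρ)) :=
  stmt16_general n lam hlam a hsum horth
end
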